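/- Let $f : \mathbb{R}^n \to \mathbb{R}^n$ be bounded by $F$ and Lipschitz with constant $L$, let $w : [0,T] \to \mathbb{R}^n$ be continuous, let $x$ solve $x_t = x_0 + \int_0^t f(x_s)ds + w_t - w_0$, and let $\overline{X}$ be the continuous Euler interpolation on a partition $\pi = \{0 = \tau_0 < \cdots < \tau_M = T\}$: $\overline{X}_t = \overline{X}_{\tau_{k-1}} + (t - \tau_{k-1}) f(\overline{X}_{\tau_{k-1}}) + w_t - w_{\tau_{k-1}}$ for $t \in [\tau_{k-1}, \tau_k]$, with $\overline{X}_0 = x_0$. Suppose additionally $w$ is Hölder continuous of order $\gamma$ with constant $C_w$. Then $\sup_{t \in [0,T]} |x_t - \overline{X}_t| \le C (|\pi|^\gamma + |\pi|)$ for a constant $C$ depending only on $L, F, C_w, T$, where $|\pi| = \max_k (\tau_k - \tau_{k-1})$. -/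
import Mathlib

open Set

set_option maxHeartbeats 1000000

/-- deterministic convergence of the continuous Euler interpolation:
`sup_{[0,T]} ‖x - X̄‖ ≤ C(|π|^γ + |π|)` with `C = C(L,F,C_w,T,γ)` only. -/
theorem stmt17 {n : ℕ} (L F Cw T γ : ℝ) (hL : 0 ≤ L) (hF : 0 ≤ F) (hCw : 0 ≤ Cw)
    (hT : 0 < T) (hγ : 0 < γ) (hγ1 : γ ≤ 1) :
    ∃ C : ℝ, ∀ (f : EuclideanSpace ℝ (Fin n) → EuclideanSpace ℝ (Fin n)),
      (∀ v, ‖f v‖ ≤ F) →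
      (∀ v v', ‖f v - f v'‖ ≤ L * ‖v - v'‖) →
      ∀ (w : ℝ → EuclideanSpace ℝ (Fin n)),
      (∀ s ∈ Icc (0:ℝ) T, ∀ t ∈ Icc (0:ℝ) T, ‖w t - w s‖ ≤ Cw * |t - s| ^ γ) →
      ∀ (x₀ : EuclideanSpace ℝ (Fin n)) (x X : ℝ → EuclideanSpace ℝ (Fin n))
        (M : ℕ) (τ : ℕ → ℝ) (πm : ℝ),
      1 ≤ M → τ 0 = 0 → τ M = T → (∀ k < M, τ k < τ (k + 1)) →
      0 < πm → (∀ k < M, τ (k + 1) - τ k ≤ πm) →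
      ContinuousOn x (Icc 0 T) →
      (∀ t ∈ Icc (0:ℝ) T, x t = x₀ + (∫ s in (0:ℝ)..t, f (x s)) + w t - w 0) →
      X 0 = x₀ →
      (∀ k < M, ∀ t ∈ Icc (τ k) (τ (k + 1)),
        X t = X (τ k) + (t - τ k) • f (X (τ k)) + w t - w (τ k)) →
      ∀ t ∈ Icc (0:ℝ) T, ‖x t - X t‖ ≤ C * (πm ^ γ + πm) := by
  refine ⟨((Real.exp (L * T) - 1) * (1 + L * T) + L * T) * (F + Cw), ?_⟩
  intro f hFb hLip w hw x₀ x X M τ πm hM hτ0 hτT hτlt hπ hmesh hxc hx hX0 hX t ht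
  -- monotonicity of τ
  have hmon : ∀ l, l ≤ M → ∀ k, k ≤ l → τ k ≤ τ l := by
    intro l
    induction l with
    | zero => intro _ k hk; interval_cases k; exact le_rfl
    | succ l ih =>
      intro hl k hk
      rcases Nat.lt_or_ge k (l + 1) with h | h
      · exact le_trans (ih (by omega) k (by omega)) (hτlt l (by omega)).le
      · have : k = l + 1 := by omega
        subst this; rfl
  have hτmem : ∀ k, k ≤ M → τ k ∈ Icc (0:ℝ) T := by
    intro k hk
    constructor
    · rw [← hτ0]; exact hmon k hk 0 (by omega)
    · rw [← hτT]; exact hmon M le_rfl k hk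
  -- continuity of f
  have hfc : Continuous f := by
    have : LipschitzWith (Real.toNNReal L) f := by
      apply LipschitzWith.of_dist_le_mul
      intro a b
      rw [dist_eq_norm, dist_eq_norm, Real.coe_toNNReal L hL]
      exact hLip a b
    exact this.continuous
  -- integrability
  have hInt : ∀ a ∈ Icc (0:ℝ) T, ∀ b ∈ Icc (0:ℝ) T,
      IntervalIntegrable (fun s => f (x s)) MeasureTheory.volume a b := by
    intro a ha b hb
    apply ContinuousOn.intervalIntegrable
    exact (hfc.comp_continuousOn hxc).mono (Set.uIcc_subset_Icc ha hb)
  set B : ℝ := F * πm + Cw * πm ^ γ with hB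
  have hπγ : (0:ℝ) ≤ πm ^ γ := Real.rpow_nonneg hπ.le γ
  have hBnn : 0 ≤ B := by positivity
  -- increment bound on x
  have hxinc : ∀ a ∈ Icc (0:ℝ) T, ∀ b ∈ Icc (0:ℝ) T, a ≤ b →
      ‖x b - x a‖ ≤ F * (b - a) + Cw * (b - a) ^ γ := by
    intro a ha b hb hab
    have hii : (∫ s in (0:ℝ)..b, f (x s)) - (∫ s in (0:ℝ)..a, f (x s))
        = ∫ s in a..b, f (x s) :=
      intervalIntegral.integral_interval_sub_left (hInt 0 (by constructor <;> simp [hT.le]) b hb)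
        (hInt 0 (by constructor <;> simp [hT.le]) a ha)
    have hxd : x b - x a = (∫ s in a..b, f (x s)) + (w b - w a) := by
      rw [hx b hb, hx a ha, ← hii]; abel
    have h1 : ‖∫ s in a..b, f (x s)‖ ≤ F * |b - a| :=
      intervalIntegral.norm_integral_le_of_norm_le_const (fun s _ => hFb (x s))
    have h2 : ‖w b - w a‖ ≤ Cw * |b - a| ^ γ := hw a ha b hb
    rw [abs_of_nonneg (by linarith)] at h1 h2
    calc ‖x b - x a‖ ≤ ‖∫ s in a..b, f (x s)‖ + ‖w b - w a‖ := by
          rw [hxd]; exact norm_add_le _ _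
      _ ≤ F * (b - a) + Cw * (b - a) ^ γ := by linarith
  -- key local estimate
  have hkey : ∀ k, k < M → ∀ u ∈ Icc (τ k) (τ (k + 1)),
      ‖x u - X u‖ ≤ ‖x (τ k) - X (τ k)‖ + L * (‖x (τ k) - X (τ k)‖ + B) * (u - τ k) := by
    intro k hk u hu
    have hak : τ k ∈ Icc (0:ℝ) T := hτmem k (by omega)
    have hbk : τ (k + 1) ∈ Icc (0:ℝ) T := hτmem (k + 1) (by omega)
    have huT : u ∈ Icc (0:ℝ) T := ⟨le_trans hak.1 hu.1, le_trans hu.2 hbk.2⟩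
    have hii : (∫ s in (0:ℝ)..u, f (x s)) - (∫ s in (0:ℝ)..(τ k), f (x s))
        = ∫ s in (τ k)..u, f (x s) :=
      intervalIntegral.integral_interval_sub_left (hInt 0 (by constructor <;> simp [hT.le]) u huT)
        (hInt 0 (by constructor <;> simp [hT.le]) (τ k) hak)
    have hconst : (u - τ k) • f (X (τ k)) = ∫ _ in (τ k)..u, f (X (τ k)) := by
      rw [intervalIntegral.integral_const]
    have hdiff : x u - X u = (x (τ k) - X (τ k))
        + ∫ s in (τ k)..u, (f (x s) - f (X (τ k))) := by
      rw [intervalIntegral.integral_sub (hInt (τ k) hak u huT) intervalIntegrable_const]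
      rw [hx u huT, hX k hk u hu, hx (τ k) hak, ← hii, hconst]
      abel
    have hnb : ‖∫ s in (τ k)..u, (f (x s) - f (X (τ k)))‖
        ≤ (L * (‖x (τ k) - X (τ k)‖ + B)) * |u - τ k| := by
      apply intervalIntegral.norm_integral_le_of_norm_le_const
      intro s hs
      rw [Set.uIoc_of_le hu.1] at hs
      have hsT : s ∈ Icc (0:ℝ) T := ⟨le_trans hak.1 hs.1.le, le_trans hs.2 huT.2⟩
      have hxs : ‖x s - x (τ k)‖ ≤ F * (s - τ k) + Cw * (s - τ k) ^ γ :=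
        hxinc (τ k) hak s hsT hs.1.le
      have hsπ : s - τ k ≤ πm := by
        have := hmesh k hk
        have := hu.2
        linarith [hs.2]
      have hpow : (s - τ k) ^ γ ≤ πm ^ γ :=
        Real.rpow_le_rpow (by linarith [hs.1]) hsπ hγ.le
      have h1 : ‖x s - X (τ k)‖ ≤ ‖x (τ k) - X (τ k)‖ + B := by
        calc ‖x s - X (τ k)‖ ≤ ‖x s - x (τ k)‖ + ‖x (τ k) - X (τ k)‖ := by
              have := norm_add_le (x s - x (τ k)) (x (τ k) - X (τ k))
              simpa using this
          _ ≤ ‖x (τ k) - X (τ k)‖ + B := by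
              have : F * (s - τ k) ≤ F * πm := by nlinarith
              rw [hB]; nlinarith
      calc ‖f (x s) - f (X (τ k))‖ ≤ L * ‖x s - X (τ k)‖ := hLip _ _
        _ ≤ L * (‖x (τ k) - X (τ k)‖ + B) := by nlinarith [norm_nonneg (x s - X (τ k))]
    rw [abs_of_nonneg (by linarith [hu.1])] at hnb
    calc ‖x u - X u‖ ≤ ‖x (τ k) - X (τ k)‖ + ‖∫ s in (τ k)..u, (f (x s) - f (X (τ k)))‖ := by
          rw [hdiff]; exact norm_add_le _ _
      _ ≤ ‖x (τ k) - X (τ k)‖ + L * (‖x (τ k) - X (τ k)‖ + B) * (u - τ k) := by linarith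
  -- discrete Grönwall
  have hgron : ∀ k, k ≤ M → ‖x (τ k) - X (τ k)‖ ≤ B * (Real.exp (L * τ k) - 1) := by
    intro k
    induction k with
    | zero =>
      intro _
      have hx0 : x 0 = x₀ := by
        rw [hx 0 (by constructor <;> simp [hT.le])]
        simp
      rw [hτ0, hx0, hX0]
      simp
    | succ k ih =>
      intro hk1
      have hk : k < M := by omega
      have haux := ih (by omega)
      set ak := ‖x (τ k) - X (τ k)‖ with hak
      have hΔ0 : 0 ≤ τ (k + 1) - τ k := by linarith [hτlt k hk]
      have hstep := hkey k hk (τ (k + 1)) ⟨(hτlt k hk).le, le_rfl⟩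
      have hexp1 : 1 + L * (τ (k + 1) - τ k) ≤ Real.exp (L * (τ (k + 1) - τ k)) := by
        linarith [Real.add_one_le_exp (L * (τ (k + 1) - τ k))]
      have hexp2 : 1 ≤ Real.exp (L * τ k) := by
        apply Real.one_le_exp
        have := (hτmem k (by omega)).1
        positivity
      have hexpmul : Real.exp (L * τ k) * Real.exp (L * (τ (k + 1) - τ k))
          = Real.exp (L * τ (k + 1)) := by
        rw [← Real.exp_add]; ring_nf
      have hLΔ : 0 ≤ L * (τ (k + 1) - τ k) := mul_nonneg hL hΔ0
      have haknn : 0 ≤ ak := norm_nonneg _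
      nlinarith [mul_nonneg hBnn (mul_nonneg (mul_nonneg hL hΔ0) (sub_nonneg.mpr hexp2)),
        mul_nonneg hBnn (sub_nonneg.mpr hexp1),
        mul_le_mul_of_nonneg_right haux hLΔ]
  -- locate t in the partition
  have hloc : ∀ m, 1 ≤ m → m ≤ M → ∀ u, u ∈ Icc (τ 0) (τ m) → ∃ k, k < m ∧ u ∈ Icc (τ k) (τ (k + 1)) := by
    intro m
    induction m with
    | zero => omega
    | succ m ih =>
      intro _ hmM u hu
      by_cases h0 : m = 0
      · subst h0; exact ⟨0, by omega, hu⟩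
      · rcases le_or_gt u (τ m) with h1 | h1
        · obtain ⟨k, hk, hku⟩ := ih (by omega) (by omega) u ⟨hu.1, h1⟩
          exact ⟨k, by omega, hku⟩
        · exact ⟨m, by omega, ⟨h1.le, hu.2⟩⟩
  obtain ⟨k, hk, htk⟩ := hloc M hM le_rfl t (by rw [hτ0, hτT]; exact ht)
  set ak := ‖x (τ k) - X (τ k)‖ with hak
  have hbound := hkey k hk t htk
  have hgb : ak ≤ B * (Real.exp (L * T) - 1) := by
    have h1 := hgron k (by omega)
    have h2 : Real.exp (L * τ k) ≤ Real.exp (L * T) := by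
      apply Real.exp_le_exp.mpr
      exact mul_le_mul_of_nonneg_left (hτmem k (by omega)).2 hL
    have h3 := mul_le_mul_of_nonneg_left (sub_le_sub_right h2 1) hBnn
    linarith
  have haknn : 0 ≤ ak := norm_nonneg _
  have htτ0 : 0 ≤ t - τ k := by linarith [htk.1]
  have htτT : t - τ k ≤ T := by
    have := (hτmem k (by omega)).1
    linarith [ht.2]
  have hexpT : 1 ≤ Real.exp (L * T) := Real.one_le_exp (by positivity)
  have hBle : B ≤ (F + Cw) * (πm ^ γ + πm) := by
    have hrw : (F + Cw) * (πm ^ γ + πm)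
        = F * πm + Cw * πm ^ γ + (F * πm ^ γ + Cw * πm) := by ring
    rw [hB, hrw]
    linarith [mul_nonneg hF hπγ, mul_nonneg hCw hπ.le]
  have hKnn : 0 ≤ (Real.exp (L * T) - 1) * (1 + L * T) + L * T := by
    have h1 : (0:ℝ) ≤ 1 + L * T := by positivity
    have h2 := mul_nonneg (sub_nonneg.mpr hexpT) h1
    have h3 : (0:ℝ) ≤ L * T := by positivity
    linarith
  have h3 : L * (ak + B) * (t - τ k) ≤ L * (ak + B) * T := by
    have h0 : 0 ≤ L * (ak + B) := by positivity
    exact mul_le_mul_of_nonneg_left htτT h0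
  have h4 : ak * (1 + L * T) ≤ B * (Real.exp (L * T) - 1) * (1 + L * T) :=
    mul_le_mul_of_nonneg_right hgb (by positivity)
  calc ‖x t - X t‖ ≤ ak + L * (ak + B) * (t - τ k) := hbound
    _ ≤ ak + L * (ak + B) * T := by linarith
    _ = ak * (1 + L * T) + L * T * B := by ring
    _ ≤ B * (Real.exp (L * T) - 1) * (1 + L * T) + L * T * B := by linarith
    _ = ((Real.exp (L * T) - 1) * (1 + L * T) + L * T) * B := by ring
    _ ≤ ((Real.exp (L * T) - 1) * (1 + L * T) + L * T) * ((F + Cw) * (πm ^ γ + πm)) :=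
        mul_le_mul_of_nonneg_left hBle hKnn
    _ = ((Real.exp (L * T) - 1) * (1 + L * T) + L * T) * (F + Cw) * (πm ^ γ + πm) := by ring
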